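/- arXiv:1002.4553 — 5 statements merged into one kernel-verified Lean document; each statement's English description precedes it below -/
import Mathlib

section
/- (Shu–Osher SSP theorem) Let ‖·‖ be a norm (or convex functional) and L a map such that the forward Euler step satisfies ‖w + Δt L(w)‖ ≤ ‖w‖ for all w whenever 0 ≤ Δt ≤ Δt_FE. Consider an m-stage Runge–Kutta method w^{(0)} = w^n, w^{(i)} = Σ_{k=0}^{i-1} (α_{i,k} w^{(k)} + Δt β_{i,k} L(w^{(k)})) with α_{i,k} ≥ 0, β_{i,k} ≥ 0 and consistency Σ_{k} α_{i,k} = 1 for each i. Then ‖w^{(m)}‖ ≤ ‖w^n‖ provided Δt ≤ c·Δt_FE where c = min over (i,k) with β_{i,k} > 0 of α_{i,k}/β_{i,k}. -/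
/-- Shu–Osher SSP theorem: if forward Euler is strongly stable for all step sizes
`0 ≤ Δt ≤ Δt_FE`, then any `m`-stage Runge–Kutta method
`w^{(i)} = ∑_{k<i} (α_{i,k} w^{(k)} + Δt β_{i,k} L(w^{(k)}))` with
`α_{i,k} ≥ 0`, `β_{i,k} ≥ 0`, `∑_k α_{i,k} = 1` (and `β_{i,k} > 0 → α_{i,k} > 0`)
is strongly stable under the CFL restriction `Δt ≤ (α_{i,k}/β_{i,k}) Δt_FE`
for all pairs with `β_{i,k} > 0`. -/
theorem ssp_runge_kutta {V : Type*} [NormedAddCommGroup V] [NormedSpace ℝ V]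
    (L : V → V) (ΔtFE : ℝ) (hFE : 0 < ΔtFE)
    (hEuler : ∀ w : V, ∀ τ : ℝ, 0 ≤ τ → τ ≤ ΔtFE → ‖w + τ • L w‖ ≤ ‖w‖)
    (m : ℕ) (hm : 1 ≤ m) (α β : ℕ → ℕ → ℝ) (Δt : ℝ) (hΔt : 0 ≤ Δt)
    (hα : ∀ i k, k < i → i ≤ m → 0 ≤ α i k)
    (hβ : ∀ i k, k < i → i ≤ m → 0 ≤ β i k)
    (hβα : ∀ i k, k < i → i ≤ m → 0 < β i k → 0 < α i k)
    (hcons : ∀ i, 1 ≤ i → i ≤ m → ∑ k ∈ Finset.range i, α i k = 1)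
    (hCFL : ∀ i k, k < i → i ≤ m → 0 < β i k → Δt ≤ (α i k / β i k) * ΔtFE)
    (ws : ℕ → V)
    (hws : ∀ i, 1 ≤ i → i ≤ m →
      ws i = ∑ k ∈ Finset.range i, (α i k • ws k + (Δt * β i k) • L (ws k))) :
    ‖ws m‖ ≤ ‖ws 0‖ := by
  suffices h : ∀ i, i ≤ m → ‖ws i‖ ≤ ‖ws 0‖ from h m le_rfl
  intro i
  induction i using Nat.strong_induction_on with
  | _ i ih =>
    intro him
    rcases Nat.eq_zero_or_pos i with rfl | hi
    · exact le_rfl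
    · rw [hws i hi him]
      calc ‖∑ k ∈ Finset.range i, (α i k • ws k + (Δt * β i k) • L (ws k))‖
          ≤ ∑ k ∈ Finset.range i, ‖α i k • ws k + (Δt * β i k) • L (ws k)‖ :=
            norm_sum_le _ _
        _ ≤ ∑ k ∈ Finset.range i, α i k * ‖ws 0‖ := by
            apply Finset.sum_le_sum
            intro k hk
            rw [Finset.mem_range] at hk
            have hαik := hα i k hk him
            have hwk : ‖ws k‖ ≤ ‖ws 0‖ := ih k hk (le_trans hk.le him)
            rcases (hβ i k hk him).lt_or_eq with hb | hb
            · have hai := hβα i k hk him hb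
              have hterm : α i k • ws k + (Δt * β i k) • L (ws k)
                  = α i k • (ws k + (Δt * β i k / α i k) • L (ws k)) := by
                rw [smul_add, smul_smul]
                congr 1
                field_simp
              rw [hterm, norm_smul, Real.norm_of_nonneg hαik]
              have hτ0 : 0 ≤ Δt * β i k / α i k :=
                div_nonneg (mul_nonneg hΔt hb.le) hai.le
              have hτ1 : Δt * β i k / α i k ≤ ΔtFE := by
                rw [div_le_iff₀ hai]
                have := hCFL i k hk him hb
                calc Δt * β i k ≤ (α i k / β i k * ΔtFE) * β i k := by
                      exact mul_le_mul_of_nonneg_right this hb.le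
                  _ = ΔtFE * α i k := by field_simp
              calc α i k * ‖ws k + (Δt * β i k / α i k) • L (ws k)‖
                  ≤ α i k * ‖ws k‖ := by
                    exact mul_le_mul_of_nonneg_left (hEuler _ _ hτ0 hτ1) hαik
                _ ≤ α i k * ‖ws 0‖ := mul_le_mul_of_nonneg_left hwk hαik
            · rw [← hb, mul_zero, zero_smul, add_zero, norm_smul,
                Real.norm_of_nonneg hαik]
              exact mul_le_mul_of_nonneg_left hwk hαik
        _ = ‖ws 0‖ := by rw [← Finset.sum_mul, hcons i hi him, one_mul]
end

section
/- (Harten) A monotone conservative three-point scheme is total variation diminishing: if w_j^{n+1} = G(w_{j-1}^n, w_j^n, w_{j+1}^n) where G is nondecreasing in each argument and the scheme can be written in incremental form w_j^{n+1} = w_j^n + C_{j+1/2}(w_{j+1}^n - w_j^n) - D_{j-1/2}(w_j^n - w_{j-1}^n) with coefficients satisfying C_{j+1/2} ≥ 0, D_{j+1/2} ≥ 0, C_{j+1/2} + D_{j+1/2} ≤ 1 for all j, then TV(w^{n+1}) ≤ TV(w^n), where TV(w) = Σ_j |w_{j+1} - w_j|. -/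
set_option maxHeartbeats 1000000 in


/-- Harten's lemma: a scheme in incremental form
`w'_j = w_j + C_{j+1/2}(w_{j+1} - w_j) - D_{j-1/2}(w_j - w_{j-1})` with
`C_{j+1/2} ≥ 0`, `D_{j+1/2} ≥ 0`, `C_{j+1/2} + D_{j+1/2} ≤ 1` is total variation
diminishing: `TV(w') ≤ TV(w)` where `TV(w) = ∑_j |w_{j+1} - w_j|`. -/
theorem harten_tvd (w w' : ℤ → ℝ) (C D : ℤ → ℝ)
    (hC : ∀ j, 0 ≤ C j) (hD : ∀ j, 0 ≤ D j) (hCD : ∀ j, C j + D j ≤ 1)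
    (hupd : ∀ j, w' j = w j + C j * (w (j + 1) - w j) - D (j - 1) * (w j - w (j - 1)))
    (hsum : Summable (fun j : ℤ => |w (j + 1) - w j|)) :
    (∑' j : ℤ, |w' (j + 1) - w' j|) ≤ ∑' j : ℤ, |w (j + 1) - w j| := by
  set a : ℤ → ℝ := fun j => |w (j + 1) - w j| with ha
  have hanonneg : ∀ j, 0 ≤ a j := fun j => abs_nonneg _
  have hC1 : ∀ j, C j ≤ 1 := fun j => by have := hCD j; have := hD j; linarith
  have hD1 : ∀ j, D j ≤ 1 := fun j => by have := hCD j; have := hC j; linarith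
  have hCa : Summable (fun j => C j * a j) :=
    hsum.of_nonneg_of_le (fun j => mul_nonneg (hC j) (hanonneg j))
      (fun j => by
        have := mul_le_of_le_one_left (hanonneg j) (hC1 j); simpa using this)
  have hDa : Summable (fun j => D j * a j) :=
    hsum.of_nonneg_of_le (fun j => mul_nonneg (hD j) (hanonneg j))
      (fun j => by
        have := mul_le_of_le_one_left (hanonneg j) (hD1 j); simpa using this)
  -- shifted versions
  have hCa' : Summable (fun j : ℤ => C (j + 1) * a (j + 1)) :=
    (Equiv.addRight (1 : ℤ)).summable_iff.mpr hCa
  have hDa' : Summable (fun j : ℤ => D (j - 1) * a (j - 1)) :=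
    (Equiv.subRight (1 : ℤ)).summable_iff.mpr hDa
  have htsumC : (∑' j : ℤ, C (j + 1) * a (j + 1)) = ∑' j, C j * a j :=
    (Equiv.addRight (1 : ℤ)).tsum_eq (fun j => C j * a j)
  have htsumD : (∑' j : ℤ, D (j - 1) * a (j - 1)) = ∑' j, D j * a j :=
    (Equiv.subRight (1 : ℤ)).tsum_eq (fun j => D j * a j)
  -- pointwise bound
  have key : ∀ j : ℤ, |w' (j + 1) - w' j| ≤
      (1 - C j - D j) * a j + C (j + 1) * a (j + 1) + D (j - 1) * a (j - 1) := by
    intro j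
    have e : w' (j + 1) - w' j =
        (1 - C j - D j) * (w (j + 1) - w j) + C (j + 1) * (w (j + 1 + 1) - w (j + 1))
          + D (j - 1) * (w (j - 1 + 1) - w (j - 1)) := by
      rw [hupd (j + 1), hupd j]
      have h1 : (j : ℤ) + 1 - 1 = j := by ring
      rw [h1]
      ring_nf
    rw [e]
    calc |(1 - C j - D j) * (w (j + 1) - w j) + C (j + 1) * (w (j + 1 + 1) - w (j + 1))
          + D (j - 1) * (w (j - 1 + 1) - w (j - 1))|
        ≤ |(1 - C j - D j) * (w (j + 1) - w j)| + |C (j + 1) * (w (j + 1 + 1) - w (j + 1))|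
          + |D (j - 1) * (w (j - 1 + 1) - w (j - 1))| := by
          exact (abs_add_le _ _).trans (by gcongr; exact abs_add_le _ _)
      _ = (1 - C j - D j) * a j + C (j + 1) * a (j + 1) + D (j - 1) * a (j - 1) := by
          rw [abs_mul, abs_mul, abs_mul, abs_of_nonneg (by have := hCD j; linarith),
            abs_of_nonneg (hC _), abs_of_nonneg (hD _)]
  have hrhs : Summable (fun j : ℤ =>
      (1 - C j - D j) * a j + C (j + 1) * a (j + 1) + D (j - 1) * a (j - 1)) := by
    have h1 : Summable (fun j : ℤ => (1 - C j - D j) * a j) := by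
      have : (fun j : ℤ => (1 - C j - D j) * a j)
          = fun j => a j - (C j * a j + D j * a j) := by funext j; ring
      rw [this]; exact hsum.sub (hCa.add hDa)
    exact (h1.add hCa').add hDa'
  have hlhs : Summable (fun j : ℤ => |w' (j + 1) - w' j|) :=
    hrhs.of_nonneg_of_le (fun j => abs_nonneg _) key
  calc (∑' j : ℤ, |w' (j + 1) - w' j|)
      ≤ ∑' j : ℤ, ((1 - C j - D j) * a j + C (j + 1) * a (j + 1)
          + D (j - 1) * a (j - 1)) := Summable.tsum_le_tsum key hlhs hrhs
    _ = ∑' j : ℤ, a j := by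
        have h1 : Summable (fun j : ℤ => (1 - C j - D j) * a j) := by
          have : (fun j : ℤ => (1 - C j - D j) * a j)
              = fun j => a j - (C j * a j + D j * a j) := by funext j; ring
          rw [this]; exact hsum.sub (hCa.add hDa)
        rw [Summable.tsum_add (h1.add hCa') hDa', Summable.tsum_add h1 hCa', htsumC, htsumD]
        have h2 : (∑' j : ℤ, (1 - C j - D j) * a j)
            = (∑' j, a j) - ((∑' j, C j * a j) + (∑' j, D j * a j)) := by
          have : (fun j : ℤ => (1 - C j - D j) * a j)
              = fun j => a j - (C j * a j + D j * a j) := by funext j; ring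
          rw [this, Summable.tsum_sub hsum (hCa.add hDa), Summable.tsum_add hCa hDa]
        rw [h2]; ring
end

section
/- A total variation diminishing scheme is monotonicity preserving: if a scheme satisfies TV(w^{n+1}) ≤ TV(w^n) for all data, is conservative with finite stencil, and preserves constants, then a monotone (nondecreasing) initial sequence remains monotone after one step. -/
open Filter

lemma tvd_aux_tele_sum (f : ℤ → ℝ) (a : ℤ) :
    ∀ b, a ≤ b → ∑ j ∈ Finset.Ico a b, (f (j + 1) - f j) = f b - f a := by
  refine Int.le_induction ?_ ?_
  · simp
  · intro b hab ih
    have hins : Finset.Ico a (b + 1) = insert b (Finset.Ico a b) := by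
      ext x; simp only [Finset.mem_Ico, Finset.mem_insert]; omega
    rw [hins, Finset.sum_insert (by simp), ih]
    ring

lemma tvd_aux_tele_abs (f : ℤ → ℝ) (a : ℤ) :
    ∀ b, a ≤ b → |f b - f a| ≤ ∑ j ∈ Finset.Ico a b, |f (j + 1) - f j| := by
  refine Int.le_induction ?_ ?_
  · simp
  · intro b hab ih
    have hins : Finset.Ico a (b + 1) = insert b (Finset.Ico a b) := by
      ext x; simp only [Finset.mem_Ico, Finset.mem_insert]; omega
    rw [hins, Finset.sum_insert (by simp)]
    calc |f (b + 1) - f a| ≤ |f b - f a| + |f (b + 1) - f b| := by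
          have h := abs_add_le (f b - f a) (f (b + 1) - f b)
          simpa [show f b - f a + (f (b + 1) - f b) = f (b + 1) - f a by ring] using h
      _ ≤ _ := by linarith

/-- A TVD scheme is monotonicity preserving: if a scheme `S` commutes with
translation, preserves constant sequences, has a finite stencil, and is total
variation diminishing, then a nondecreasing initial sequence with finite limits
at `±∞` remains nondecreasing after one step. -/
theorem tvd_implies_monotonicity_preserving
    (S : (ℤ → ℝ) → (ℤ → ℝ))
    (htrans : ∀ w : ℤ → ℝ, S (fun j => w (j + 1)) = fun j => S w (j + 1))
    (hconst : ∀ c : ℝ, S (fun _ => c) = fun _ => c)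
    (hstencil : ∃ rad : ℕ, ∀ (w₁ w₂ : ℤ → ℝ) (j : ℤ),
      (∀ k : ℤ, |k - j| ≤ (rad : ℤ) → w₁ k = w₂ k) → S w₁ j = S w₂ j)
    (htvd : ∀ w : ℤ → ℝ, Summable (fun j : ℤ => |w (j + 1) - w j|) →
      (∑' j : ℤ, |S w (j + 1) - S w j|) ≤ ∑' j : ℤ, |w (j + 1) - w j|)
    (w : ℤ → ℝ) (hmono : Monotone w)
    (hbot : ∃ a : ℝ, Tendsto w atBot (nhds a))
    (htop : ∃ b : ℝ, Tendsto w atTop (nhds b)) :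
    Monotone (S w) := by
  obtain ⟨rad, hrad⟩ := hstencil
  apply monotone_int_of_le_succ
  by_contra hcon
  push_neg at hcon
  obtain ⟨j0, hj0⟩ := hcon
  set M : ℤ := |j0| + (rad : ℤ) + 2 with hM
  have habs : (0:ℤ) ≤ |j0| := abs_nonneg _
  have hj0a : -|j0| ≤ j0 := neg_abs_le j0
  have hj0b : j0 ≤ |j0| := le_abs_self j0
  have hj1a : |j0 + 1| ≤ |j0| + 1 := (abs_add_le j0 1).trans_eq (by norm_num)
  have hradnn : (0:ℤ) ≤ (rad:ℤ) := Int.natCast_nonneg rad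
  set c : ℤ → ℤ := fun j => max (-M) (min M j) with hc
  set wM : ℤ → ℝ := fun j => w (c j) with hwM
  have hcid : ∀ k : ℤ, -M ≤ k → k ≤ M → c k = k := by
    intro k h1 h2; simp [hc]; omega
  have hagree : ∀ j : ℤ, |j| ≤ M - rad → S wM j = S w j := by
    intro j hj
    apply hrad
    intro k hk
    have hk1 : -M ≤ k := by
      have := abs_le.mp hk; have := abs_le.mp hj; omega
    have hk2 : k ≤ M := by
      have := abs_le.mp hk; have := abs_le.mp hj; omega
    simp only [hwM]
    rw [hcid k hk1 hk2]
  have hright : ∀ j : ℤ, M + rad ≤ j → S wM j = w M := by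
    intro j hj
    have h1 : S wM j = S (fun _ => w M) j := by
      apply hrad
      intro k hk
      have hk1 : M ≤ k := by have := abs_le.mp hk; omega
      have hck : c k = M := by simp [hc]; omega
      simp only [hwM]; rw [hck]
    rw [h1, hconst]
  have hleft : ∀ j : ℤ, j ≤ -(M + rad) → S wM j = w (-M) := by
    intro j hj
    have h1 : S wM j = S (fun _ => w (-M)) j := by
      apply hrad
      intro k hk
      have hk1 : k ≤ -M := by have := abs_le.mp hk; omega
      have hck : c k = -M := by simp [hc]; omega
      simp only [hwM]; rw [hck]
    rw [h1, hconst]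
  have hsupp : ∀ j : ℤ, j ∉ Finset.Ico (-M) M → |wM (j + 1) - wM j| = 0 := by
    intro j hj
    rw [Finset.mem_Ico] at hj
    push_neg at hj
    have hcc : c (j + 1) = c j := by
      simp only [hc]
      rcases le_or_gt (-M) j with h | h
      · have hMj : M ≤ j := hj h
        omega
      · omega
    simp only [hwM, hcc, sub_self, abs_zero]
  have hsummM : Summable (fun j : ℤ => |wM (j + 1) - wM j|) :=
    summable_of_ne_finset_zero (s := Finset.Ico (-M) M) hsupp
  have htvwM : (∑' j : ℤ, |wM (j + 1) - wM j|) = w M - w (-M) := by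
    rw [tsum_eq_sum (s := Finset.Ico (-M) M) hsupp]
    have h1 : ∀ j ∈ Finset.Ico (-M) M, |wM (j + 1) - wM j| = wM (j + 1) - wM j := by
      intro j hj
      rw [Finset.mem_Ico] at hj
      apply abs_of_nonneg
      simp only [hwM]
      apply sub_nonneg.mpr
      apply hmono
      simp only [hc]; omega
    rw [Finset.sum_congr rfl h1, tvd_aux_tele_sum wM (-M) M (by omega)]
    simp only [hwM]
    rw [hcid (-M) (by omega) (by omega), hcid M (by omega) (by omega)]
  have hsuppS : ∀ j : ℤ, j ∉ Finset.Icc (-(M + rad) - 1) (M + rad) →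
      |S wM (j + 1) - S wM j| = 0 := by
    intro j hj
    rw [Finset.mem_Icc] at hj
    push_neg at hj
    rcases le_or_gt j (-(M + rad) - 1) with h | h
    · rw [hleft (j + 1) (by omega), hleft j (by omega), sub_self, abs_zero]
    · have hMj : M + (rad:ℤ) < j := hj (by omega)
      rw [hright (j + 1) (by omega), hright j (by omega), sub_self, abs_zero]
  have hsummS : Summable (fun j : ℤ => |S wM (j + 1) - S wM j|) :=
    summable_of_ne_finset_zero (s := Finset.Icc (-(M + rad) - 1) (M + rad)) hsuppS
  have hupper : (∑' j : ℤ, |S wM (j + 1) - S wM j|) ≤ w M - w (-M) := by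
    rw [← htvwM]; exact htvd wM hsummM
  have hk0 : -(M + (rad:ℤ)) ≤ j0 := by omega
  have hk3 : j0 + 1 ≤ M + (rad:ℤ) := by omega
  have hb0 : |j0| ≤ M - (rad:ℤ) := by simp only [hM]; omega
  have hb1 : |j0 + 1| ≤ M - (rad:ℤ) := by simp only [hM]; omega
  have hFj0 : S wM j0 = S w j0 := hagree j0 hb0
  have hFj1 : S wM (j0 + 1) = S w (j0 + 1) := hagree (j0 + 1) hb1
  have hFk0 : S wM (-(M + (rad:ℤ))) = w (-M) := hleft _ (le_refl _)
  have hFk3 : S wM (M + (rad:ℤ)) = w M := hright _ (le_refl _)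
  have hsplit : (∑ j ∈ Finset.Ico (-(M + (rad:ℤ))) j0, |S wM (j + 1) - S wM j|)
      + |S wM (j0 + 1) - S wM j0|
      + (∑ j ∈ Finset.Ico (j0 + 1) (M + (rad:ℤ)), |S wM (j + 1) - S wM j|)
      ≤ ∑' j : ℤ, |S wM (j + 1) - S wM j| := by
    have e1 : (∑ j ∈ Finset.Ico (-(M + (rad:ℤ))) j0, |S wM (j + 1) - S wM j|)
        + (∑ j ∈ Finset.Ico j0 (j0 + 1), |S wM (j + 1) - S wM j|)
        = ∑ j ∈ Finset.Ico (-(M + (rad:ℤ))) (j0 + 1), |S wM (j + 1) - S wM j| :=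
      by rw [← Finset.sum_union (Finset.Ico_disjoint_Ico_consecutive _ _ _),
             Finset.Ico_union_Ico_eq_Ico hk0 (by omega : j0 ≤ j0 + 1)]
    have e2 : (∑ j ∈ Finset.Ico (-(M + (rad:ℤ))) (j0 + 1), |S wM (j + 1) - S wM j|)
        + (∑ j ∈ Finset.Ico (j0 + 1) (M + (rad:ℤ)), |S wM (j + 1) - S wM j|)
        = ∑ j ∈ Finset.Ico (-(M + (rad:ℤ))) (M + (rad:ℤ)), |S wM (j + 1) - S wM j| :=
      by rw [← Finset.sum_union (Finset.Ico_disjoint_Ico_consecutive _ _ _),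
             Finset.Ico_union_Ico_eq_Ico (by omega : -(M + (rad:ℤ)) ≤ j0 + 1) hk3]
    have e3 : (∑ j ∈ Finset.Ico j0 (j0 + 1), |S wM (j + 1) - S wM j|)
        = |S wM (j0 + 1) - S wM j0| := by
      have : Finset.Ico j0 (j0 + 1) = {j0} := by
        ext x; simp only [Finset.mem_Ico, Finset.mem_singleton]; omega
      rw [this, Finset.sum_singleton]
    calc (∑ j ∈ Finset.Ico (-(M + (rad:ℤ))) j0, |S wM (j + 1) - S wM j|)
          + |S wM (j0 + 1) - S wM j0|
          + (∑ j ∈ Finset.Ico (j0 + 1) (M + (rad:ℤ)), |S wM (j + 1) - S wM j|)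
        = ∑ j ∈ Finset.Ico (-(M + (rad:ℤ))) (M + (rad:ℤ)), |S wM (j + 1) - S wM j| := by
          rw [← e2, ← e1, ← e3]
      _ ≤ ∑' j : ℤ, |S wM (j + 1) - S wM j| :=
          Summable.sum_le_tsum _ (fun _ _ => abs_nonneg _) hsummS
  have h1 : |S wM j0 - S wM (-(M + (rad:ℤ)))| ≤
      ∑ j ∈ Finset.Ico (-(M + (rad:ℤ))) j0, |S wM (j + 1) - S wM j| :=
    tvd_aux_tele_abs (S wM) _ j0 hk0
  have h2 : |S wM (M + (rad:ℤ)) - S wM (j0 + 1)| ≤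
      ∑ j ∈ Finset.Ico (j0 + 1) (M + (rad:ℤ)), |S wM (j + 1) - S wM j| :=
    tvd_aux_tele_abs (S wM) (j0 + 1) _ hk3
  have ha : S wM j0 - S wM (-(M + (rad:ℤ))) ≤ |S wM j0 - S wM (-(M + (rad:ℤ)))| :=
    le_abs_self _
  have hb : S wM j0 - S wM (j0 + 1) ≤ |S wM (j0 + 1) - S wM j0| := by
    rw [abs_sub_comm]; exact le_abs_self _
  have hd : S wM (M + (rad:ℤ)) - S wM (j0 + 1) ≤ |S wM (M + (rad:ℤ)) - S wM (j0 + 1)| :=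
    le_abs_self _
  linarith [ha, hb, hd, h1, h2, hsplit, hupper, hFj0, hFj1, hFk0, hFk3, hj0]
end

section
/- The hydrostatic reconstruction preserves the lake-at-rest steady state in one step: suppose discrete data satisfies u_K = 0 and H_K - h_K = η̄ (constant) for all cells K, with H_K ≥ 0. Define h*_{KL} = min(h_K, h_L) and H*_{KL} = max(H_K - h_K + h*_{KL}, 0). Then H*_{KL} = H*_{LK} for every interface, the reconstructed interface states w*_{KL} = (H*_{KL}, 0) and w*_{LK} = (H*_{LK}, 0) coincide, and hence for any consistent conservative numerical flux Φ the well-balanced update leaves the data unchanged: Φ(w*_{KL}, w*_{LK}; n_{KL}) equals the exact flux of the common state, and the sum of interface fluxes balances the source terms S*_K = (0, (g/2)(H*_{KL}² - H_K²) n_{KL}) so that w^{n+1}_K = w^n_K. -/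
/-- The hydrostatic reconstruction preserves the lake-at-rest steady state.
In a 1D shallow water finite volume scheme with cells indexed by `ℤ`, suppose
`u_j = 0` and `H_j - h_j = η̄` for all cells, with `H_j ≥ 0`.  With
`h*_{j+1/2} = min(h_j, h_{j+1})` and hydrostatic reconstructed depths
`H*_{j+1/2,L} = max(H_j - h_j + h*_{j+1/2}, 0)`,
`H*_{j+1/2,R} = max(H_{j+1} - h_{j+1} + h*_{j+1/2}, 0)`,
the two reconstructed interface states coincide; hence, for any numerical flux
`Φ` that is consistent at zero-velocity states (`Φ((H,0),(H,0)) = (0, (g/2)H²)`),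
the interface fluxes balance the source terms and the well-balanced update
leaves the data unchanged. -/
theorem hydrostatic_reconstruction_well_balanced
    (g Δt Δx η : ℝ) (hg : 0 < g) (hΔt : 0 < Δt) (hΔx : 0 < Δx)
    (H h : ℤ → ℝ) (hpos : ∀ j, 0 ≤ H j) (hlake : ∀ j, H j - h j = η)
    (HsL HsR : ℤ → ℝ)
    (hHsL : ∀ j, HsL j = max (H j - h j + min (h j) (h (j + 1))) 0)
    (hHsR : ∀ j, HsR j = max (H (j + 1) - h (j + 1) + min (h j) (h (j + 1))) 0)
    (Φ : ℝ × ℝ → ℝ × ℝ → ℝ × ℝ)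
    (hΦ : ∀ H' : ℝ, Φ (H', 0) (H', 0) = (0, g / 2 * H' ^ 2))
    (Hnew qnew : ℤ → ℝ)
    (hHnew : ∀ j, Hnew j = H j -
      Δt / Δx * ((Φ (HsL j, 0) (HsR j, 0)).1 - (Φ (HsL (j - 1), 0) (HsR (j - 1), 0)).1))
    (hqnew : ∀ j, qnew j = 0 -
      Δt / Δx * ((Φ (HsL j, 0) (HsR j, 0)).2 - (Φ (HsL (j - 1), 0) (HsR (j - 1), 0)).2)
      + Δt / Δx * (g / 2 * (HsL j) ^ 2 - g / 2 * (HsR (j - 1)) ^ 2)) :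
    (∀ j, HsL j = HsR j) ∧ (∀ j, Hnew j = H j) ∧ (∀ j, qnew j = 0) := by
  have heq : ∀ j, HsL j = HsR j := by
    intro j
    rw [hHsL, hHsR, hlake, hlake]
  refine ⟨heq, ?_, ?_⟩
  · intro j
    rw [hHnew, heq, heq, hΦ, hΦ]
    simp
  · intro j
    rw [hqnew, heq, heq, hΦ, hΦ]
    simp [heq (j-1)]
end

section
/- The wall boundary flux determined by the numerical boundary condition is explicit: for the 1D shallow water system at an impermeable wall (u_n = 0 imposed), imposing the numerical condition l₃(w_K)·Φ = l₃(w_K)·F_n(w_K) along the outgoing characteristic with eigenvalue λ₃ = u_n + c, the boundary pressure term satisfies (g/2)H²|_wall = (c H u_n + (g/2)H²)|_K, where c = √(gH_K); i.e., the unique solution Φ = (0, P n_x, P n_y) of the linear constraint is given by P = c_K H_K (u_n)_K + (g/2)H_K². -/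
open Matrix

/-- Impermeable-wall boundary flux for the shallow water equations: with interior
state `w_K = (H, Hu, Hv)`, `H > 0`, unit normal `(n_x, n_y)`, `u_n = u n_x + v n_y`,
`c = √(gH)`, the vector `l₃ = (c - u_n, n_x, n_y)` is a left eigenvector of the
normal-flux Jacobian `A_n` for the eigenvalue `λ₃ = u_n + c`, and the wall flux
`Φ = (0, P n_x, P n_y)` satisfies the numerical boundary condition
`l₃·Φ = l₃·F_n(w_K)` if and only if `P = c H u_n + (g/2)H²`. -/
theorem wall_boundary_flux (g H u v nx ny : ℝ) (hg : 0 < g) (hH : 0 < H)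
    (hn : nx ^ 2 + ny ^ 2 = 1) (un c : ℝ) (hun : un = u * nx + v * ny)
    (hc : c = Real.sqrt (g * H))
    (A : Matrix (Fin 3) (Fin 3) ℝ)
    (hA : A = Matrix.of ![![0, nx, ny],
      ![-u * un + g * H * nx, un + u * nx, u * ny],
      ![-v * un + g * H * ny, v * nx, un + v * ny]])
    (l₃ Fn : Fin 3 → ℝ)
    (hl₃ : l₃ = ![c - un, nx, ny])
    (hFn : Fn = ![H * un, H * u * un + g / 2 * H ^ 2 * nx,
      H * v * un + g / 2 * H ^ 2 * ny]) :
    Matrix.vecMul l₃ A = (un + c) • l₃ ∧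
    ∀ P : ℝ, l₃ ⬝ᵥ ![0, P * nx, P * ny] = l₃ ⬝ᵥ Fn ↔
      P = c * H * un + g / 2 * H ^ 2 := by
  have hc2 : c ^ 2 = g * H := by
    rw [hc, Real.sq_sqrt (by positivity)]
  subst hA hl₃ hFn hun
  constructor
  · funext i
    fin_cases i <;>
      simp [Matrix.vecMul, dotProduct, Fin.sum_univ_three, Matrix.vecHead,
        Matrix.vecTail] <;> nlinarith [hc2, hn]
  · intro P
    simp only [dotProduct, Fin.sum_univ_three, Matrix.cons_val_zero,
      Matrix.cons_val_one, Matrix.head_cons, Matrix.cons_val_two, Matrix.tail_cons]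
    constructor
    · intro h; linear_combination h - (P - g / 2 * H ^ 2) * hn
    · intro h; subst h; linear_combination c * H * (u * nx + v * ny) * hn
end
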